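/- Let G = (V,E) be a finite simple graph and let B, C ⊆ E be disjoint edge sets with S = B ∪ C. Define X₁ = ∂S \ ∂C, X₂ = ∂S \ ∂B, X₃ = ∂S ∩ ∂B ∩ ∂C and X₄ = (∂B ∪ ∂C) \ ∂S. Call a pair of colorings c₁ : ∂B → {black, white, grey} and c₂ : ∂C → {black, white, grey} consistent with c : ∂S → {black, white, grey} if: for u ∈ X₁, c(u) = c₁(u); for u ∈ X₂, c(u) = c₂(u); for u ∈ X₃, if c(u) ∈ {black, grey} then c₁(u) = c₂(u) = c(u), and if c(u) = white then either (c₁(u) = white and c₂(u) = grey) or (c₁(u) = grey and c₂(u) = white); for u ∈ X₄, exactly one of the following holds: c₁(u) = c₂(u) = black, or (c₁(u) = white and c₂(u) = grey), or (c₁(u) = grey and c₂(u) = white). Then for every coloring c : ∂S → {black, white, grey}, A_S(c) = min over all pairs (c₁, c₂) consistent with c of A_B(c₁) + A_C(c₂) − #black(X₃, c₁) − #black(X₄, c₁), where #black(X, c₁) is the number of vertices of X colored black by c₁ (the minimum over an empty set being ∞). -/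

import Mathlib

/-- `V(S)`: the set of vertices incident to some edge of `S`. -/
def incVerts {V : Type*} (S : Set (Sym2 V)) : Set V :=
  {v | ∃ e ∈ S, v ∈ e}

/-- The boundary `∂S` of an edge set `S ⊆ E(G)`: vertices incident both to an edge of `S`
and to an edge of `E(G) \ S`. -/
def bdry {V : Type*} (G : SimpleGraph V) (S : Set (Sym2 V)) : Set V :=
  {v | (∃ e ∈ S, v ∈ e) ∧ ∃ e ∈ G.edgeSet \ S, v ∈ e}

/-- The three colors used in the dynamic programming. -/
inductive Color
  | black
  | white
  | grey
deriving DecidableEq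

/-- `D ⊆ V(F)` is a valid partial dominating set for the edge set `F` and the coloring
`c` of the boundary `∂F`: black boundary vertices are in `D`; white boundary vertices are
not in `D` but are joined by an edge of `F` to a vertex of `D`; grey boundary vertices are
not in `D`; every non-boundary vertex of `V(F)` is in `D` or joined by an edge of `F` to a
vertex of `D`. -/
def ValidPartial {V : Type*} (G : SimpleGraph V) (F : Set (Sym2 V)) (c : V → Color)
    (D : Set V) : Prop :=
  D ⊆ incVerts F ∧
  (∀ v ∈ bdry G F, c v = Color.black → v ∈ D) ∧
  (∀ v ∈ bdry G F, c v = Color.white → v ∉ D ∧ ∃ u ∈ D, s(v, u) ∈ F) ∧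
  (∀ v ∈ bdry G F, c v = Color.grey → v ∉ D) ∧
  (∀ v ∈ incVerts F, v ∉ bdry G F → v ∈ D ∨ ∃ u ∈ D, s(v, u) ∈ F)

/-- `A_F(c) ∈ ℕ ∪ {∞}`: the minimum cardinality of a valid partial dominating set for `F`
and `c` (`∞` if none exists). -/
noncomputable def costA {V : Type*} (G : SimpleGraph V) (F : Set (Sym2 V))
    (c : V → Color) : ℕ∞ :=
  sInf {n : ℕ∞ | ∃ D : Set V, ValidPartial G F c D ∧ n = D.ncard}

/-- The number of vertices of `X` colored black by `c`. -/
noncomputable def nblack {V : Type*} (X : Set V) (c : V → Color) : ℕ :=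
  (X ∩ {v | c v = Color.black}).ncard

/-- The colorings `c₁` of `∂B` and `c₂` of `∂C` are consistent with the coloring `c` of
`∂(B ∪ C)`, relative to the sets `X₁ = ∂(B∪C) \ ∂C`, `X₂ = ∂(B∪C) \ ∂B`,
`X₃ = ∂(B∪C) ∩ ∂B ∩ ∂C` and `X₄ = (∂B ∪ ∂C) \ ∂(B∪C)`. -/
def Consistent {V : Type*} (G : SimpleGraph V) (B C : Set (Sym2 V))
    (c c₁ c₂ : V → Color) : Prop :=
  (∀ u ∈ bdry G (B ∪ C) \ bdry G C, c u = c₁ u) ∧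
  (∀ u ∈ bdry G (B ∪ C) \ bdry G B, c u = c₂ u) ∧
  (∀ u ∈ bdry G (B ∪ C) ∩ bdry G B ∩ bdry G C,
    ((c u = Color.black ∨ c u = Color.grey) → c₁ u = c u ∧ c₂ u = c u) ∧
    (c u = Color.white →
      (c₁ u = Color.white ∧ c₂ u = Color.grey) ∨
      (c₁ u = Color.grey ∧ c₂ u = Color.white))) ∧
  (∀ u ∈ (bdry G B ∪ bdry G C) \ bdry G (B ∪ C),
    (c₁ u = Color.black ∧ c₂ u = Color.black) ∨
    (c₁ u = Color.white ∧ c₂ u = Color.grey) ∨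
    (c₁ u = Color.grey ∧ c₂ u = Color.white))

/-!
A valid set `D` for `B ∪ C` restricts to valid sets `D ∩ V(B)` and `D ∩ V(C)` under a consistent
pair of colorings: at a vertex shared by `B` and `C`, a vertex of `D` is black on both sides, and
a vertex that has to be dominated is white on a side that dominates it and grey on the other.
Conversely, valid sets for `B` and `C` under a consistent pair glue to a valid set for `B ∪ C`.
In both directions the two pieces overlap exactly in the `c₁`-black vertices of `X₃ ∪ X₄`, so
inclusion–exclusion turns the cardinalities into the stated cost.
-/

namespace Color

/-- `col.Admits p q`: the requirement that `ValidPartial` puts on a boundary vertex of color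
`col` that lies in `D` iff `p` and has an `F`-neighbour in `D` iff `q`. -/
def Admits : Color → Prop → Prop → Prop
  | black, p, _ => p
  | white, p, q => ¬p ∧ q
  | grey, p, _ => ¬p

theorem admits_iff {col : Color} {p q : Prop} :
    col.Admits p q ↔ (col = black → p) ∧ (col = white → ¬p ∧ q) ∧ (col = grey → ¬p) := by
  cases col <;> simp [Admits]

variable {col col₁ col₂ : Color} {p p₁ p₂ q q' q₁ q₂ : Prop}

theorem Admits.mono (h : col.Admits p q) (hq : q → q') : col.Admits p q' := by
  cases col <;> simp_all [Admits]

theorem Admits.of_ne_white (hw : col ≠ white) (h : col.Admits p q) : col.Admits p q' := by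
  cases col <;> simp_all [Admits]

theorem Admits.eq_black (h : col.Admits p q) (hp : p) : col = black := by
  cases col <;> simp_all [Admits]

open Classical in
noncomputable def ofStatus (p q : Prop) : Color :=
  if p then black else if q then white else grey

theorem ofStatus_admits (hq : ¬p → q → q') : (ofStatus p q).Admits p q' := by
  by_cases hp : p <;> by_cases hq' : q <;> simp_all [ofStatus, Admits]

/-- The condition that `Consistent` imposes at a vertex of `X₃`. -/
def BoundarySplit (col col₁ col₂ : Color) : Prop :=
  ((col = black ∨ col = grey) → col₁ = col ∧ col₂ = col) ∧
  (col = white → (col₁ = white ∧ col₂ = grey) ∨ (col₁ = grey ∧ col₂ = white))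

/-- The condition that `Consistent` imposes at a vertex of `X₄`. -/
def InnerSplit (col₁ col₂ : Color) : Prop :=
  (col₁ = black ∧ col₂ = black) ∨ (col₁ = white ∧ col₂ = grey) ∨ (col₁ = grey ∧ col₂ = white)

theorem BoundarySplit.symm (h : BoundarySplit col col₁ col₂) : BoundarySplit col col₂ col₁ := by
  cases col <;> cases col₁ <;> cases col₂ <;> simp_all [BoundarySplit]

theorem InnerSplit.symm (h : InnerSplit col₁ col₂) : InnerSplit col₂ col₁ := by
  cases col₁ <;> cases col₂ <;> simp_all [InnerSplit]

theorem BoundarySplit.admits (h : BoundarySplit col col₁ col₂) (h₁ : col₁.Admits p₁ q₁)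
    (h₂ : col₂.Admits p₂ q₂) : col.Admits (p₁ ∨ p₂) (q₁ ∨ q₂) := by
  cases col <;> cases col₁ <;> cases col₂ <;> simp_all [BoundarySplit, Admits]

theorem InnerSplit.mem_or_dominated (h : InnerSplit col₁ col₂) (h₁ : col₁.Admits p₁ q₁)
    (h₂ : col₂.Admits p₂ q₂) : (p₁ ∨ p₂) ∨ (q₁ ∨ q₂) := by
  cases col₁ <;> cases col₂ <;> simp_all [InnerSplit, Admits]

theorem BoundarySplit.eq_black (h : BoundarySplit col col₁ col₂) (h₁ : col₁ = black) :
    col₂ = black := by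
  cases col <;> cases col₂ <;> simp_all [BoundarySplit]

theorem InnerSplit.eq_black (h : InnerSplit col₁ col₂) (h₁ : col₁ = black) : col₂ = black := by
  cases col₂ <;> simp_all [InnerSplit]

theorem boundarySplit_self (hw : col ≠ white) : BoundarySplit col col col := by
  simp [BoundarySplit, hw]

theorem boundarySplit_white_ofStatus (hp : ¬p) (q : Prop) :
    BoundarySplit white (ofStatus p q) (ofStatus p ¬q) := by
  by_cases hq : q <;> simp [BoundarySplit, ofStatus, hp, hq]

theorem innerSplit_ofStatus (p q : Prop) : InnerSplit (ofStatus p q) (ofStatus p ¬q) := by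
  by_cases hp : p <;> by_cases hq : q <;> simp [InnerSplit, ofStatus, hp, hq]

end Color

section Boundary

variable {V : Type*} {G : SimpleGraph V} {A B C F F' : Set (Sym2 V)} {D D' : Set V} {v : V}

def Dominated (F : Set (Sym2 V)) (D : Set V) (v : V) : Prop :=
  ∃ u ∈ D, s(v, u) ∈ F

theorem incVerts_union : incVerts (B ∪ C) = incVerts B ∪ incVerts C := by
  ext v
  simp only [incVerts, Set.mem_union, Set.mem_ofPred_eq, or_and_right, exists_or]

theorem Dominated.mem_incVerts (h : Dominated F D v) : v ∈ incVerts F :=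
  let ⟨u, _, hu⟩ := h
  ⟨_, hu, Sym2.mem_mk_left v u⟩

theorem Dominated.mono (h : Dominated F D v) (hF : F ⊆ F') (hD : D ⊆ D') : Dominated F' D' v :=
  let ⟨u, hu, huv⟩ := h
  ⟨u, hD hu, hF huv⟩

theorem dominated_union : Dominated (B ∪ C) D v ↔ Dominated B D v ∨ Dominated C D v := by
  simp only [Dominated, Set.mem_union, and_or_left, exists_or]

theorem dominated_inter_incVerts : Dominated F (D ∩ incVerts F) v ↔ Dominated F D v :=
  ⟨fun h => h.mono subset_rfl Set.inter_subset_left,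
    fun ⟨u, hu, huv⟩ => ⟨u, ⟨hu, _, huv, Sym2.mem_mk_right v u⟩, huv⟩⟩

theorem dominated_union_union (h : Dominated B D v ∨ Dominated C D' v) :
    Dominated (B ∪ C) (D ∪ D') v :=
  h.elim (·.mono Set.subset_union_left Set.subset_union_left)
    (·.mono Set.subset_union_right Set.subset_union_right)

theorem bdry_union_subset : bdry G (B ∪ C) ⊆ bdry G B ∪ bdry G C := by
  rintro v ⟨⟨e, he | he, hve⟩, f, ⟨hfE, hf⟩, hvf⟩
  · exact Or.inl ⟨⟨e, he, hve⟩, f, ⟨hfE, fun h => hf (Or.inl h)⟩, hvf⟩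
  · exact Or.inr ⟨⟨e, he, hve⟩, f, ⟨hfE, fun h => hf (Or.inr h)⟩, hvf⟩

theorem mem_bdry_of_subset (hA : A ⊆ F) (hv : v ∈ bdry G F) (hvA : v ∈ incVerts A) :
    v ∈ bdry G A :=
  let ⟨_, e, ⟨heE, heF⟩, hve⟩ := hv
  ⟨hvA, e, ⟨heE, fun h => heF (hA h)⟩, hve⟩

theorem mem_bdry_of_mem_incVerts_inter (hB : B ⊆ G.edgeSet) (hBC : Disjoint B C)
    (hvB : v ∈ incVerts B) (hvC : v ∈ incVerts C) : v ∈ bdry G C :=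
  let ⟨e, he, hve⟩ := hvB
  ⟨hvC, e, ⟨hB he, Set.disjoint_left.mp hBC he⟩, hve⟩

theorem mem_incVerts_of_mem_bdry_of_notMem_bdry_union (hv : v ∈ bdry G B)
    (hvS : v ∉ bdry G (B ∪ C)) : v ∈ incVerts C := by
  obtain ⟨⟨e, he, hve⟩, f, ⟨hfE, hfB⟩, hvf⟩ := hv
  by_contra hvC
  exact hvS ⟨⟨e, Or.inl he, hve⟩, f, ⟨hfE, fun h => h.elim hfB fun hfC => hvC ⟨f, hfC, hvf⟩⟩, hvf⟩

theorem mem_bdry_inter_of_mem_diff_bdry_union (hB : B ⊆ G.edgeSet) (hC : C ⊆ G.edgeSet)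
    (hBC : Disjoint B C) (hv : v ∈ (bdry G B ∪ bdry G C) \ bdry G (B ∪ C)) :
    v ∈ bdry G B ∧ v ∈ bdry G C := by
  obtain ⟨hvB | hvC, hvS⟩ := hv
  · exact ⟨hvB, mem_bdry_of_mem_incVerts_inter hB hBC hvB.1
      (mem_incVerts_of_mem_bdry_of_notMem_bdry_union hvB hvS)⟩
  · rw [Set.union_comm] at hvS
    exact ⟨mem_bdry_of_mem_incVerts_inter hC hBC.symm hvC.1
      (mem_incVerts_of_mem_bdry_of_notMem_bdry_union hvC hvS), hvC⟩

end Boundary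

section ValidPartial

variable {V : Type*} {G : SimpleGraph V} {B C F : Set (Sym2 V)} {c c₁ c₂ : V → Color}
  {D D₁ D₂ : Set V} {v : V}

theorem validPartial_iff : ValidPartial G F c D ↔ D ⊆ incVerts F ∧
    (∀ v ∈ bdry G F, (c v).Admits (v ∈ D) (Dominated F D v)) ∧
    (∀ v ∈ incVerts F, v ∉ bdry G F → v ∈ D ∨ Dominated F D v) := by
  simp only [ValidPartial, Color.admits_iff, Dominated, imp_and, forall_and, and_assoc]

theorem costA_le (h : ValidPartial G F c D) : costA G F c ≤ D.ncard :=
  sInf_le ⟨D, h, rfl⟩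

theorem exists_validPartial_of_costA_ne_top (h : costA G F c ≠ ⊤) :
    ∃ D, ValidPartial G F c D ∧ costA G F c = D.ncard := by
  have hne : {n : ℕ∞ | ∃ D : Set V, ValidPartial G F c D ∧ n = D.ncard}.Nonempty := by
    by_contra hempty
    exact h (by rw [costA, Set.not_nonempty_iff_eq_empty.mp hempty, sInf_empty])
  exact csInf_mem hne

theorem ValidPartial.mem_or_dominated_left (hC : C ⊆ G.edgeSet) (hBC : Disjoint B C)
    (hD : ValidPartial G (B ∪ C) c D) (hv : v ∈ incVerts B) (hvB : v ∉ bdry G B) :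
    v ∈ D ∨ Dominated B D v := by
  have hvS : v ∉ bdry G (B ∪ C) := fun h => hvB (mem_bdry_of_subset Set.subset_union_left h hv)
  have hvC : v ∉ incVerts C := fun h => hvB (mem_bdry_of_mem_incVerts_inter hC hBC.symm h hv)
  rcases (validPartial_iff.mp hD).2.2 v (incVerts_union ▸ Or.inl hv) hvS with h | h
  · exact Or.inl h
  · exact Or.inr ((dominated_union.mp h).resolve_right fun h => hvC h.mem_incVerts)

theorem Consistent.boundarySplit (h : Consistent G B C c c₁ c₂)
    (hv : v ∈ bdry G (B ∪ C) ∩ bdry G B ∩ bdry G C) : Color.BoundarySplit (c v) (c₁ v) (c₂ v) :=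
  h.2.2.1 v hv

theorem Consistent.innerSplit (h : Consistent G B C c c₁ c₂)
    (hv : v ∈ (bdry G B ∪ bdry G C) \ bdry G (B ∪ C)) : Color.InnerSplit (c₁ v) (c₂ v) :=
  h.2.2.2 v hv

theorem Consistent.symm (h : Consistent G B C c c₁ c₂) : Consistent G C B c c₂ c₁ := by
  unfold Consistent
  rw [Set.union_comm C B]
  refine ⟨h.2.1, h.1, fun v hv => ?_, fun v hv => ?_⟩
  · exact (h.boundarySplit ⟨⟨hv.1.1, hv.2⟩, hv.1.2⟩).symm
  · exact (h.innerSplit ⟨Set.union_comm _ _ ▸ hv.1, hv.2⟩).symm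

end ValidPartial

section Combine

variable {V : Type*} {G : SimpleGraph V} {B C : Set (Sym2 V)} {c c₁ c₂ : V → Color}
  {D₁ D₂ : Set V} {v : V}

theorem admits_union_of_mem_bdry_left (hcons : Consistent G B C c c₁ c₂)
    (h₁ : ValidPartial G B c₁ D₁) (h₂ : ValidPartial G C c₂ D₂) (hv : v ∈ bdry G (B ∪ C))
    (hvB : v ∈ bdry G B) :
    (c v).Admits (v ∈ D₁ ∪ D₂) (Dominated (B ∪ C) (D₁ ∪ D₂) v) := by
  rw [validPartial_iff] at h₁ h₂
  by_cases hvC : v ∈ bdry G C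
  · exact ((hcons.boundarySplit ⟨⟨hv, hvB⟩, hvC⟩).admits (h₁.2.1 v hvB) (h₂.2.1 v hvC)).mono
      dominated_union_union
  · have hvD₂ : v ∉ D₂ := fun h => hvC (mem_bdry_of_subset Set.subset_union_right hv (h₂.1 h))
    rw [hcons.1 v ⟨hv, hvC⟩, show (v ∈ D₁ ∪ D₂) = (v ∈ D₁) from propext (or_iff_left hvD₂)]
    exact (h₁.2.1 v hvB).mono (dominated_union_union ∘ Or.inl)

theorem ValidPartial.union (hB : B ⊆ G.edgeSet) (hC : C ⊆ G.edgeSet) (hBC : Disjoint B C)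
    (hcons : Consistent G B C c c₁ c₂) (h₁ : ValidPartial G B c₁ D₁)
    (h₂ : ValidPartial G C c₂ D₂) : ValidPartial G (B ∪ C) c (D₁ ∪ D₂) := by
  refine validPartial_iff.mpr ⟨?_, fun v hv => ?_, fun v hv hvS => ?_⟩
  · rw [incVerts_union]
    exact Set.union_subset_union (validPartial_iff.mp h₁).1 (validPartial_iff.mp h₂).1
  · rcases bdry_union_subset hv with hvB | hvC
    · exact admits_union_of_mem_bdry_left hcons h₁ h₂ hv hvB
    · rw [Set.union_comm B C, Set.union_comm D₁ D₂] at *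
      exact admits_union_of_mem_bdry_left hcons.symm h₂ h₁ hv hvC
  rw [validPartial_iff] at h₁ h₂
  by_cases hvX₄ : v ∈ bdry G B ∪ bdry G C
  · obtain ⟨hvB, hvC⟩ := mem_bdry_inter_of_mem_diff_bdry_union hB hC hBC ⟨hvX₄, hvS⟩
    exact (hcons.innerSplit ⟨hvX₄, hvS⟩).mem_or_dominated (h₁.2.1 v hvB) (h₂.2.1 v hvC)
      |>.imp_right dominated_union_union
  · rw [incVerts_union] at hv
    rcases hv with hv | hv
    · exact (h₁.2.2 v hv fun h => hvX₄ (Or.inl h)).imp Or.inl (dominated_union_union ∘ Or.inl)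
    · exact (h₂.2.2 v hv fun h => hvX₄ (Or.inr h)).imp Or.inr (dominated_union_union ∘ Or.inr)

theorem inter_eq_of_consistent (hB : B ⊆ G.edgeSet) (hC : C ⊆ G.edgeSet) (hBC : Disjoint B C)
    (hcons : Consistent G B C c c₁ c₂) (h₁ : ValidPartial G B c₁ D₁)
    (h₂ : ValidPartial G C c₂ D₂) :
    D₁ ∩ D₂ = ((bdry G (B ∪ C) ∩ bdry G B ∩ bdry G C) ∪
      ((bdry G B ∪ bdry G C) \ bdry G (B ∪ C))) ∩ {v | c₁ v = Color.black} := by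
  rw [validPartial_iff] at h₁ h₂
  ext v
  constructor
  · rintro ⟨hv₁, hv₂⟩
    have hvB := mem_bdry_of_mem_incVerts_inter hC hBC.symm (h₂.1 hv₂) (h₁.1 hv₁)
    have hvC := mem_bdry_of_mem_incVerts_inter hB hBC (h₁.1 hv₁) (h₂.1 hv₂)
    refine ⟨?_, (h₁.2.1 v hvB).eq_black hv₁⟩
    by_cases hvS : v ∈ bdry G (B ∪ C)
    · exact Or.inl ⟨⟨hvS, hvB⟩, hvC⟩
    · exact Or.inr ⟨Or.inl hvB, hvS⟩
  · rintro ⟨hv, hbl⟩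
    obtain ⟨⟨hvB, hvC⟩, hbl₂⟩ : (v ∈ bdry G B ∧ v ∈ bdry G C) ∧ c₂ v = Color.black := by
      rcases hv with hv | hv
      · exact ⟨⟨hv.1.2, hv.2⟩, (hcons.boundarySplit hv).eq_black hbl⟩
      · exact ⟨mem_bdry_inter_of_mem_diff_bdry_union hB hC hBC hv,
          (hcons.innerSplit hv).eq_black hbl⟩
    have hv₁ := h₁.2.1 v hvB
    have hv₂ := h₂.2.1 v hvC
    rw [hbl] at hv₁
    rw [hbl₂] at hv₂
    exact ⟨hv₁, hv₂⟩

theorem ncard_union_eq_of_consistent [Finite V] (hB : B ⊆ G.edgeSet) (hC : C ⊆ G.edgeSet)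
    (hBC : Disjoint B C) (hcons : Consistent G B C c c₁ c₂) (h₁ : ValidPartial G B c₁ D₁)
    (h₂ : ValidPartial G C c₂ D₂) :
    ((D₁ ∪ D₂).ncard : ℕ∞) = D₁.ncard + D₂.ncard
      - (nblack (bdry G (B ∪ C) ∩ bdry G B ∩ bdry G C) c₁ : ℕ∞)
      - (nblack ((bdry G B ∪ bdry G C) \ bdry G (B ∪ C)) c₁ : ℕ∞) := by
  have hinter : (D₁ ∩ D₂).ncard = nblack (bdry G (B ∪ C) ∩ bdry G B ∩ bdry G C) c₁
      + nblack ((bdry G B ∪ bdry G C) \ bdry G (B ∪ C)) c₁ := by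
    rw [inter_eq_of_consistent hB hC hBC hcons h₁ h₂, Set.union_inter_distrib_right, nblack,
      nblack, Set.ncard_union_eq]
    exact Set.disjoint_left.mpr fun v hv₃ hv₄ => hv₄.1.2 hv₃.1.1.1
  have := Set.ncard_union_add_ncard_inter D₁ D₂
  rw [← Nat.cast_add, ← ENat.natCast_sub, ← ENat.natCast_sub]
  exact congrArg _ (by omega)

theorem costA_union_le [Finite V] (hB : B ⊆ G.edgeSet) (hC : C ⊆ G.edgeSet)
    (hBC : Disjoint B C) (hcons : Consistent G B C c c₁ c₂) :
    costA G (B ∪ C) c ≤ costA G B c₁ + costA G C c₂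
      - (nblack (bdry G (B ∪ C) ∩ bdry G B ∩ bdry G C) c₁ : ℕ∞)
      - (nblack ((bdry G B ∪ bdry G C) \ bdry G (B ∪ C)) c₁ : ℕ∞) := by
  by_cases hA₁ : costA G B c₁ = ⊤
  · simp [hA₁]
  by_cases hA₂ : costA G C c₂ = ⊤
  · simp [hA₂]
  obtain ⟨D₁, h₁, hD₁⟩ := exists_validPartial_of_costA_ne_top hA₁
  obtain ⟨D₂, h₂, hD₂⟩ := exists_validPartial_of_costA_ne_top hA₂
  rw [hD₁, hD₂, ← ncard_union_eq_of_consistent hB hC hBC hcons h₁ h₂]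
  exact costA_le (h₁.union hB hC hBC hcons h₂)

end Combine

section Split

variable {V : Type*} {G : SimpleGraph V} {B C S : Set (Sym2 V)} {c : V → Color} {D : Set V}
  {q : V → Prop} {v : V}

/-- Used with `q = Dominated B D` for the `B`-side and `q = ¬Dominated B D` for the `C`-side, so
that a vertex needing a neighbour in `D` is credited to `B` whenever a `B`-edge provides one. -/
noncomputable def splitColoring (G : SimpleGraph V) (S : Set (Sym2 V)) (c : V → Color)
    (D : Set V) (q : V → Prop) : V → Color :=
  open Classical in
  fun v => if v ∈ bdry G S ∧ c v ≠ Color.white then c v else Color.ofStatus (v ∈ D) (q v)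

theorem splitColoring_of_mem_bdry (hv : v ∈ bdry G S) (hw : c v ≠ Color.white) :
    splitColoring G S c D q v = c v := by
  simp [splitColoring, hv, hw]

theorem splitColoring_of_white (hw : c v = Color.white) :
    splitColoring G S c D q v = Color.ofStatus (v ∈ D) (q v) := by
  simp [splitColoring, hw]

theorem splitColoring_of_notMem_bdry (hv : v ∉ bdry G S) :
    splitColoring G S c D q v = Color.ofStatus (v ∈ D) (q v) := by
  simp [splitColoring, hv]

theorem splitColoring_admits {q' : Prop} (hD : ValidPartial G S c D)
    (hq : (v ∈ bdry G S → c v = Color.white) → v ∉ D → q v → q') :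
    (splitColoring G S c D q v).Admits (v ∈ D) q' := by
  by_cases h : v ∈ bdry G S ∧ c v ≠ Color.white
  · rw [splitColoring_of_mem_bdry h.1 h.2]
    exact ((validPartial_iff.mp hD).2.1 v h.1).of_ne_white h.2
  · rw [splitColoring, if_neg h]
    exact Color.ofStatus_admits (hq fun hv => not_not.mp (not_and.mp h hv))

theorem validPartial_splitColoring_left (hC : C ⊆ G.edgeSet) (hBC : Disjoint B C)
    (hD : ValidPartial G (B ∪ C) c D) :
    ValidPartial G B (splitColoring G (B ∪ C) c D (Dominated B D)) (D ∩ incVerts B) := by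
  refine validPartial_iff.mpr ⟨Set.inter_subset_right, fun v hv => ?_, fun v hv hvB => ?_⟩
  · rw [dominated_inter_incVerts,
      show (v ∈ D ∩ incVerts B) = (v ∈ D) from propext (and_iff_left hv.1)]
    exact splitColoring_admits hD fun _ _ h => h
  · rw [dominated_inter_incVerts]
    exact (hD.mem_or_dominated_left hC hBC hv hvB).imp_left fun h => ⟨h, hv⟩

theorem validPartial_splitColoring_right (hB : B ⊆ G.edgeSet) (hBC : Disjoint B C)
    (hD : ValidPartial G (B ∪ C) c D) :
    ValidPartial G C (splitColoring G (B ∪ C) c D (¬Dominated B D ·)) (D ∩ incVerts C) := by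
  refine validPartial_iff.mpr ⟨Set.inter_subset_right, fun v hv => ?_, fun v hv hvC => ?_⟩
  · rw [dominated_inter_incVerts,
      show (v ∈ D ∩ incVerts C) = (v ∈ D) from propext (and_iff_left hv.1)]
    refine splitColoring_admits hD fun hw hvD hvB => ?_
    have hS := validPartial_iff.mp hD
    have hdom : Dominated (B ∪ C) D v := by
      by_cases hvS : v ∈ bdry G (B ∪ C)
      · exact ((Color.admits_iff.mp (hS.2.1 v hvS)).2.1 (hw hvS)).2
      · exact (hS.2.2 v (incVerts_union ▸ Or.inr hv.1) hvS).resolve_left hvD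
    exact (dominated_union.mp hdom).resolve_left hvB
  · rw [dominated_inter_incVerts]
    rw [Set.union_comm] at hD
    exact (hD.mem_or_dominated_left hB hBC.symm hv hvC).imp_left fun h => ⟨h, hv⟩

theorem consistent_splitColoring (hD : ValidPartial G (B ∪ C) c D) :
    Consistent G B C c (splitColoring G (B ∪ C) c D (Dominated B D))
      (splitColoring G (B ∪ C) c D (¬Dominated B D ·)) := by
  have hS := validPartial_iff.mp hD
  have hwhite : ∀ v ∈ bdry G (B ∪ C), c v = Color.white → v ∉ D ∧ Dominated (B ∪ C) D v :=
    fun v hv hw => (Color.admits_iff.mp (hS.2.1 v hv)).2.1 hw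
  refine ⟨fun v hv => ?_, fun v hv => ?_, fun v hv => ?_, fun v hv => ?_⟩
  · obtain ⟨hv, hvC⟩ := hv
    by_cases hw : c v = Color.white
    · obtain ⟨hvD, hdom⟩ := hwhite v hv hw
      have hdomB : Dominated B D v := (dominated_union.mp hdom).resolve_right fun h =>
        hvC (mem_bdry_of_subset Set.subset_union_right hv h.mem_incVerts)
      simp [splitColoring_of_white hw, Color.ofStatus, hw, hvD, hdomB]
    · exact (splitColoring_of_mem_bdry hv hw).symm
  · obtain ⟨hv, hvB⟩ := hv
    by_cases hw : c v = Color.white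
    · have hdomB : ¬Dominated B D v := fun h =>
        hvB (mem_bdry_of_subset Set.subset_union_left hv h.mem_incVerts)
      simp [splitColoring_of_white hw, Color.ofStatus, hw, (hwhite v hv hw).1, hdomB]
    · exact (splitColoring_of_mem_bdry hv hw).symm
  · obtain ⟨⟨hv, -⟩, -⟩ := hv
    by_cases hw : c v = Color.white
    · rw [splitColoring_of_white hw, splitColoring_of_white hw, hw]
      exact Color.boundarySplit_white_ofStatus (hwhite v hv hw).1 _
    · rw [splitColoring_of_mem_bdry hv hw, splitColoring_of_mem_bdry hv hw]
      exact Color.boundarySplit_self hw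
  · rw [splitColoring_of_notMem_bdry hv.2, splitColoring_of_notMem_bdry hv.2]
    exact Color.innerSplit_ofStatus _ _

theorem le_costA_union [Finite V] (hB : B ⊆ G.edgeSet) (hC : C ⊆ G.edgeSet)
    (hBC : Disjoint B C) (hD : ValidPartial G (B ∪ C) c D) :
    ∃ c₁ c₂ : V → Color, Consistent G B C c c₁ c₂ ∧
      costA G B c₁ + costA G C c₂
        - (nblack (bdry G (B ∪ C) ∩ bdry G B ∩ bdry G C) c₁ : ℕ∞)
        - (nblack ((bdry G B ∪ bdry G C) \ bdry G (B ∪ C)) c₁ : ℕ∞) ≤ D.ncard := by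
  have h₁ := validPartial_splitColoring_left hC hBC hD
  have h₂ := validPartial_splitColoring_right hB hBC hD
  have hcons := consistent_splitColoring hD
  refine ⟨_, _, hcons, ?_⟩
  calc _ ≤ (D ∩ incVerts B).ncard + (D ∩ incVerts C).ncard
        - (nblack (bdry G (B ∪ C) ∩ bdry G B ∩ bdry G C) _ : ℕ∞)
        - (nblack ((bdry G B ∪ bdry G C) \ bdry G (B ∪ C)) _ : ℕ∞) := by
        gcongr
        exacts [costA_le h₁, costA_le h₂]
    _ = ((D ∩ incVerts B) ∪ (D ∩ incVerts C)).ncard :=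
        (ncard_union_eq_of_consistent hB hC hBC hcons h₁ h₂).symm
    _ = D.ncard := by
        rw [← Set.inter_union_distrib_left, ← incVerts_union,
          Set.inter_eq_left.mpr (validPartial_iff.mp hD).1]

end Split

theorem dp_recursion_general {V : Type*} [Fintype V] (G : SimpleGraph V)
    (B C : Set (Sym2 V)) (hB : B ⊆ G.edgeSet) (hC : C ⊆ G.edgeSet) (hBC : Disjoint B C)
    (c : V → Color) :
    costA G (B ∪ C) c =
      sInf {n : ℕ∞ | ∃ c₁ c₂ : V → Color, Consistent G B C c c₁ c₂ ∧
        n = costA G B c₁ + costA G C c₂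
          - (nblack (bdry G (B ∪ C) ∩ bdry G B ∩ bdry G C) c₁ : ℕ∞)
          - (nblack ((bdry G B ∪ bdry G C) \ bdry G (B ∪ C)) c₁ : ℕ∞)} := by
  refine le_antisymm (le_sInf ?_) (le_sInf ?_)
  · rintro _ ⟨c₁, c₂, hcons, rfl⟩
    exact costA_union_le hB hC hBC hcons
  · rintro _ ⟨D, hD, rfl⟩
    obtain ⟨c₁, c₂, hcons, hle⟩ := le_costA_union hB hC hBC hD
    exact le_trans (sInf_le ⟨c₁, c₂, hcons, rfl⟩) hle

/-- the dynamic programming recursion: for disjoint `B, C ⊆ E(G)` and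
`S = B ∪ C`, for every coloring `c` of `∂S`,
`A_S(c) = min { A_B(c₁) + A_C(c₂) - #black(X₃, c₁) - #black(X₄, c₁) }` over all pairs
`(c₁, c₂)` consistent with `c` (the minimum over the empty set being `∞`). -/
theorem dp_recursion {V : Type*} [Fintype V] [DecidableEq V] (G : SimpleGraph V)
    (B C : Set (Sym2 V)) (hB : B ⊆ G.edgeSet) (hC : C ⊆ G.edgeSet) (hBC : Disjoint B C)
    (c : V → Color) :
    costA G (B ∪ C) c =
      sInf {n : ℕ∞ | ∃ c₁ c₂ : V → Color, Consistent G B C c c₁ c₂ ∧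
        n = costA G B c₁ + costA G C c₂
          - (nblack (bdry G (B ∪ C) ∩ bdry G B ∩ bdry G C) c₁ : ℕ∞)
          - (nblack ((bdry G B ∪ bdry G C) \ bdry G (B ∪ C)) c₁ : ℕ∞)} :=
  dp_recursion_general G B C hB hC hBC c
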